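/- The Demazure operators on R = k[x_1,…,x_{n+1}] satisfy the braid relation ∂_i ∂_{i+1} ∂_i = ∂_{i+1} ∂_i ∂_{i+1}, and ∂_i ∂_j = ∂_j ∂_i for |i−j| ≥ 2. -/

import Mathlib

/-!
Multiplication by `X a - X b` is injective (the substitution `x_a ↦ x_a - x_b` is an automorphism
carrying `X a` to it), so divided differences are determined by their defining relation and it
suffices to compare both sides after multiplying by a product of linear forms. Multiplied by
`(x_a - x_b)(x_b - x_c)(x_a - x_c)`, both `∂_{ab} ∂_{bc} ∂_{ab} f` and `∂_{bc} ∂_{ab} ∂_{bc} f`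
become the alternating sum `∑_{w ∈ S_3} sign(w) • w f`; the computation uses that `∂_{ab} f` is
`s_{ab}`-invariant, and the two sums agree by the braid relation among transpositions. For disjoint
pairs, both `∂_{ab} ∂_{cd} f` and `∂_{cd} ∂_{ab} f` times `(x_a - x_b)(x_c - x_d)` equal
`(1 - s_{ab})(1 - s_{cd}) f`.
-/

open MvPolynomial

/-- `DemRel i f g` says that `g = ∂_i f`, i.e. `(x_i − x_{i+1})·g = f − s_i f`. -/
def DemRel (n : ℕ) (k : Type*) [CommRing k] (i : Fin n)
    (f g : MvPolynomial (Fin (n + 1)) k) : Prop :=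
  (X i.castSucc - X i.succ) * g = f - rename (Equiv.swap i.castSucc i.succ) f

open Equiv

namespace MvPolynomial

variable {σ k : Type*} [CommRing k] [DecidableEq σ]

theorem isLeftRegular_X_sub_X {a b : σ} (hab : a ≠ b) :
    IsLeftRegular (X a - X b : MvPolynomial σ k) := by
  let e : MvPolynomial σ k ≃ₐ[k] MvPolynomial σ k :=
    AlgEquiv.ofAlgHom (aeval (Function.update X a (X a - X b)))
      (aeval (Function.update X a (X a + X b)))
      (algHom_ext fun v => by by_cases hv : v = a <;> simp [hv, hab.symm])
      (algHom_ext fun v => by by_cases hv : v = a <;> simp [hv, hab.symm])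
  have he : e (X a) = X a - X b := by simp [e]
  intro p q hpq
  rw [← he] at hpq
  simpa using congrArg e.symm hpq

theorem rename_swap_rename_swap (a b : σ) (f : MvPolynomial σ k) :
    rename (swap a b) (rename (swap a b) f) = f := by
  simp [rename_rename, ← Perm.coe_mul]

theorem rename_swap_braid {a b c : σ} (hab : a ≠ b) (hac : a ≠ c) (hbc : b ≠ c)
    (f : MvPolynomial σ k) :
    rename (swap b c) (rename (swap a b) (rename (swap b c) f)) =
      rename (swap a b) (rename (swap b c) (rename (swap a b) f)) := by
  have h : swap b c * swap a b * swap b c = swap a b * swap b c * swap a b := by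
    rw [swap_mul_swap_mul_swap hab hac, swap_comm a b, swap_comm b c,
      swap_mul_swap_mul_swap hbc.symm hac.symm, swap_comm]
  simp only [rename_rename, ← Perm.coe_mul, ← mul_assoc, h]

theorem rename_swap_comm {a b c d : σ} (h : [a, b, c, d].Nodup) (f : MvPolynomial σ k) :
    rename (swap c d) (rename (swap a b) f) = rename (swap a b) (rename (swap c d) f) := by
  simp only [rename_rename, ← Perm.coe_mul, (Perm.disjoint_swap_swap h).commute.eq]

/-- `g = ∂_{ab} f`, stated without division. -/
def IsDividedDifference (a b : σ) (f g : MvPolynomial σ k) : Prop :=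
  (X a - X b) * g = f - rename (swap a b) f

namespace IsDividedDifference

variable {a b c d : σ} {f g g₁ g₂ g₃ h₁ h₂ h₃ : MvPolynomial σ k}

theorem symm (h : IsDividedDifference a b f g) : IsDividedDifference b a f (-g) := by
  unfold IsDividedDifference at *
  rw [swap_comm]
  linear_combination h

theorem neg_symm (h : IsDividedDifference a b f g) : IsDividedDifference b a (-f) g := by
  unfold IsDividedDifference at *
  rw [swap_comm, map_neg]
  linear_combination -h

theorem rename_swap_self (hab : a ≠ b) (h : IsDividedDifference a b f g) :
    rename (swap a b) g = g := by
  have h' := congrArg (rename (swap a b)) h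
  simp only [map_mul, map_sub, rename_X, swap_apply_left, swap_apply_right,
    rename_swap_rename_swap] at h'
  unfold IsDividedDifference at h
  exact isLeftRegular_X_sub_X hab (by linear_combination -h' - h)

theorem mul_mul_eq_of_disjoint (hac : a ≠ c) (had : a ≠ d) (hbc : b ≠ c) (hbd : b ≠ d)
    (h₁ : IsDividedDifference a b f g₁) (h₂ : IsDividedDifference c d g₁ g₂) :
    (X a - X b) * (X c - X d) * g₂ =
      f - rename (swap a b) f - rename (swap c d) f + rename (swap c d) (rename (swap a b) f) := by
  have h₁' := congrArg (rename (swap c d)) h₁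
  simp only [map_mul, map_sub, rename_X, swap_apply_of_ne_of_ne hac had,
    swap_apply_of_ne_of_ne hbc hbd] at h₁'
  unfold IsDividedDifference at h₁ h₂
  linear_combination (X a - X b) * h₂ + h₁ - h₁'

theorem mul_mul_mul_eq_of_braid (hab : a ≠ b) (hac : a ≠ c) (hbc : b ≠ c)
    (h₁ : IsDividedDifference a b f g₁) (h₂ : IsDividedDifference b c g₁ g₂)
    (h₃ : IsDividedDifference a b g₂ g₃) :
    (X a - X b) * (X b - X c) * (X a - X c) * g₃ =
      f - rename (swap a b) f - rename (swap b c) f + rename (swap b c) (rename (swap a b) f)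
        + rename (swap a b) (rename (swap b c) f)
        - rename (swap a b) (rename (swap b c) (rename (swap a b) f)) := by
  have hg₁_inv := h₁.rename_swap_self hab
  have h₂' := congrArg (rename (swap a b)) h₂
  have h₁' := congrArg (rename (swap b c)) h₁
  simp only [map_mul, map_sub, rename_X, swap_apply_left, swap_apply_right,
    swap_apply_of_ne_of_ne hab hac, swap_apply_of_ne_of_ne hac.symm hbc.symm] at h₂' h₁'
  have h₁'' := congrArg (rename (swap a b)) h₁'
  simp only [map_mul, map_sub, rename_X, swap_apply_left,
    swap_apply_of_ne_of_ne hac.symm hbc.symm] at h₁''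
  unfold IsDividedDifference at h₁ h₂ h₃
  linear_combination (X b - X c) * (X a - X c) * h₃ + (X a - X c) * h₂ - (X b - X c) * h₂'
    - (X b - X c) * hg₁_inv + h₁ - h₁' + h₁''

theorem eq_of_braid (hab : a ≠ b) (hac : a ≠ c) (hbc : b ≠ c)
    (hg₁ : IsDividedDifference a b f g₁) (hg₂ : IsDividedDifference b c g₁ g₂)
    (hg₃ : IsDividedDifference a b g₂ g₃)
    (hh₁ : IsDividedDifference b c f h₁) (hh₂ : IsDividedDifference a b h₁ h₂)
    (hh₃ : IsDividedDifference b c h₂ h₃) :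
    g₃ = h₃ := by
  have eg := mul_mul_mul_eq_of_braid hab hac hbc hg₁ hg₂ hg₃
  -- the second chain is `∂_{cb} ∂_{ba} ∂_{cb}` up to sign, since `∂_{ba} = -∂_{ab}`
  have eh := mul_mul_mul_eq_of_braid hbc.symm hac.symm hab.symm hh₁.symm hh₂.neg_symm hh₃.symm
  rw [swap_comm c b, swap_comm b a, rename_swap_braid hab hac hbc] at eh
  refine ((isLeftRegular_X_sub_X hab).mul (isLeftRegular_X_sub_X hbc)).mul
    (isLeftRegular_X_sub_X hac) ?_
  linear_combination eg - eh

theorem eq_of_disjoint (hab : a ≠ b) (hcd : c ≠ d) (hac : a ≠ c) (had : a ≠ d)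
    (hbc : b ≠ c) (hbd : b ≠ d)
    (hg₁ : IsDividedDifference a b f g₁) (hg₂ : IsDividedDifference c d g₁ g₂)
    (hh₁ : IsDividedDifference c d f h₁) (hh₂ : IsDividedDifference a b h₁ h₂) :
    g₂ = h₂ := by
  have eg := mul_mul_eq_of_disjoint hac had hbc hbd hg₁ hg₂
  have eh := mul_mul_eq_of_disjoint hac.symm hbc.symm had.symm hbd.symm hh₁ hh₂
  rw [← rename_swap_comm (by simp [hab, hcd, hac, had, hbc, hbd])] at eh
  refine (isLeftRegular_X_sub_X hab).mul (isLeftRegular_X_sub_X hcd) ?_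
  linear_combination eg - eh

end IsDividedDifference

end MvPolynomial

/-- The Demazure operators on `R = k[x_1,…,x_{n+1}]` satisfy the braid relation
`∂_i ∂_{i+1} ∂_i = ∂_{i+1} ∂_i ∂_{i+1}` and commute `∂_i ∂_j = ∂_j ∂_i` for `|i−j| ≥ 2`. -/
theorem demazure_braid_and_distant_commute (n : ℕ) (k : Type*) [CommRing k] :
    (∀ i j : Fin n, (j : ℕ) = (i : ℕ) + 1 →
      ∀ f g1 g2 g3 h1 h2 h3 : MvPolynomial (Fin (n + 1)) k,
        DemRel n k i f g1 → DemRel n k j g1 g2 → DemRel n k i g2 g3 →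
        DemRel n k j f h1 → DemRel n k i h1 h2 → DemRel n k j h2 h3 →
        g3 = h3) ∧
    (∀ i j : Fin n, ((i : ℕ) + 2 ≤ (j : ℕ) ∨ (j : ℕ) + 2 ≤ (i : ℕ)) →
      ∀ f g1 g2 h1 h2 : MvPolynomial (Fin (n + 1)) k,
        DemRel n k i f g1 → DemRel n k j g1 g2 →
        DemRel n k j f h1 → DemRel n k i h1 h2 →
        g2 = h2) := by
  refine ⟨fun i j hij f g1 g2 g3 h1 h2 h3 e1 e2 e3 d1 d2 d3 => ?_,
    fun i j hij f g1 g2 h1 h2 e1 e2 d1 d2 => ?_⟩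
  · have hji : i.succ = j.castSucc := Fin.ext (by simp [hij])
    unfold DemRel at *
    rw [hji] at e1 e3 d2
    exact IsDividedDifference.eq_of_braid (by simp [Fin.ext_iff]; omega)
      (by simp [Fin.ext_iff]; omega) (by simp [Fin.ext_iff]) e1 e2 e3 d1 d2 d3
  · exact IsDividedDifference.eq_of_disjoint Fin.castSucc_lt_succ.ne Fin.castSucc_lt_succ.ne
      (by simp [Fin.ext_iff]; omega) (by simp [Fin.ext_iff]; omega)
      (by simp [Fin.ext_iff]; omega) (by simp [Fin.ext_iff]; omega) e1 e2 d1 d2
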